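/- Let T be a perfect Roman domination stable tree of order n ≥ 3 with diameter at least 4, and let P = x_1x_2⋯x_k be a longest path of T with d(x_2) = 2. Then x_3 is not adjacent to a pendant path P_2, i.e., there do not exist vertices w_1, w_2 ∉ {x_1,…,x_k} with x_3w_1 ∈ E(T), w_1w_2 ∈ E(T), d(w_1) = 2, and w_2 a leaf. -/
import Mathlib


open SimpleGraph

/-- A perfect Roman dominating function: values in {0,1,2}, and every vertex with
value 0 has exactly one neighbor with value 2. -/
def IsPRDF {V : Type*} (G : SimpleGraph V) (f : V → ℕ) : Prop :=
  (∀ v, f v ≤ 2) ∧ ∀ u, f u = 0 → ∃! v, G.Adj u v ∧ f v = 2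

/-- The perfect Roman domination number: minimum weight of a PRDF. -/
noncomputable def prdn {V : Type*} [Fintype V] (G : SimpleGraph V) : ℕ :=
  sInf {w | ∃ f : V → ℕ, IsPRDF G f ∧ ∑ v, f v = w}

/-- A graph is perfect Roman domination stable if removing any vertex
leaves the perfect Roman domination number unchanged. -/
noncomputable def Stable {V : Type*} [Fintype V] [DecidableEq V] (G : SimpleGraph V) : Prop :=
  ∀ v : V, prdn (G.induce {u | u ≠ v}) = prdn G

/-- The set of vertices receiving 0 under every minimum-weight PRDF. -/
def Wset {V : Type*} [Fintype V] (G : SimpleGraph V) : Set V :=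
  {u | ∀ f : V → ℕ, IsPRDF G f → (∑ v, f v) = prdn G → f u = 0}

/-- Degree of a vertex. -/
noncomputable def deg {V : Type*} (G : SimpleGraph V) (v : V) : ℕ := (G.neighborSet v).ncard
lemma exists_min_prdf {V : Type*} [Fintype V] (G : SimpleGraph V) :
    ∃ f : V → ℕ, IsPRDF G f ∧ ∑ v, f v = prdn G := by
  have hne : {w | ∃ f : V → ℕ, IsPRDF G f ∧ ∑ v, f v = w}.Nonempty := by
    refine ⟨∑ v : V, (2:ℕ), fun _ => 2, ⟨fun v => le_refl 2, fun u hu => absurd hu (by norm_num)⟩, rfl⟩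
  obtain ⟨f, hf, hw⟩ := Nat.sInf_mem hne
  exact ⟨f, hf, hw⟩

lemma prdn_le {V : Type*} [Fintype V] {G : SimpleGraph V} {f : V → ℕ} (hf : IsPRDF G f) :
    prdn G ≤ ∑ v, f v :=
  Nat.sInf_le ⟨f, hf, rfl⟩

lemma prdn_induce_le {V : Type*} [Fintype V] [DecidableEq V] (G : SimpleGraph V) (u : V)
    (g : V → ℕ) (hb : ∀ v, g v ≤ 2)
    (hdom : ∀ a : V, a ≠ u → g a = 0 → ∃! b : V, b ≠ u ∧ G.Adj a b ∧ g b = 2) :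
    prdn (G.induce {w | w ≠ u}) ≤ ∑ a ∈ Finset.univ.erase u, g a := by
  have hmem : ∀ x : V, x ∈ Finset.univ.erase u ↔ x ∈ {w : V | w ≠ u} := by
    intro x; simp [Finset.mem_erase]
  have hsum : ∑ a ∈ Finset.univ.erase u, g a = ∑ a : {w : V | w ≠ u}, g ↑a :=
    Finset.sum_subtype _ hmem g
  rw [hsum]
  refine prdn_le ⟨fun a => hb _, ?_⟩
  rintro ⟨a, ha⟩ h0
  obtain ⟨b, ⟨hbu, hab, hb2⟩, hbun⟩ := hdom a ha h0
  refine ⟨⟨b, hbu⟩, ⟨by simpa using hab, hb2⟩, ?_⟩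
  rintro ⟨c, hc⟩ ⟨hadj, hc2⟩
  have : c = b := hbun c ⟨hc, by simpa using hadj, hc2⟩
  exact Subtype.ext this

lemma leaf_zero {V : Type*} [Fintype V] [DecidableEq V] {G : SimpleGraph V} (hs : Stable G)
    {u v : V} (hleaf : G.neighborSet u = {v}) {f : V → ℕ} (hf : IsPRDF G f)
    (hmin : ∑ a, f a = prdn G) : f u = 0 := by
  by_contra h0
  have huv : G.Adj u v := by
    have : v ∈ G.neighborSet u := by rw [hleaf]; exact rfl
    exact this
  have hvu : v ≠ u := huv.ne'
  have hadj_u : ∀ a : V, G.Adj a u → a = v := by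
    intro a ha
    have : a ∈ G.neighborSet u := ha.symm
    rwa [hleaf] at this
  have hsplit : ∑ a, f a = f u + ∑ a ∈ Finset.univ.erase u, f a :=
    (Finset.add_sum_erase _ f (Finset.mem_univ u)).symm
  have hstable := hs u
  by_cases hcase : f u = 1 ∨ f v ≠ 0
  · -- delete u, keep f
    have hle : prdn (G.induce {w | w ≠ u}) ≤ ∑ a ∈ Finset.univ.erase u, f a := by
      refine prdn_induce_le G u f hf.1 ?_
      intro a hau ha0
      obtain ⟨b, ⟨hab, hb2⟩, hbun⟩ := hf.2 a ha0
      have hbu : b ≠ u := by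
        intro hbu; subst hbu
        have hav : a = v := hadj_u a hab
        rcases hcase with h1 | h1
        · omega
        · rw [hav] at ha0; exact h1 ha0
      exact ⟨b, ⟨hbu, hab, hb2⟩, fun c ⟨_, hc1, hc2⟩ => hbun c ⟨hc1, hc2⟩⟩
    have : 1 ≤ f u := Nat.one_le_iff_ne_zero.mpr h0
    omega
  · push_neg at hcase
    obtain ⟨hune, hv0⟩ := hcase
    have hu2 : f u = 2 := by have := hf.1 u; omega
    set g := Function.update f v 1 with hg
    have hgv : g v = 1 := Function.update_self v 1 f
    have hgne : ∀ a, a ≠ v → g a = f a := fun a ha => Function.update_of_ne ha 1 f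
    have hle : prdn (G.induce {w | w ≠ u}) ≤ ∑ a ∈ Finset.univ.erase u, g a := by
      refine prdn_induce_le G u g (fun a => ?_) ?_
      · by_cases hav : a = v
        · rw [hav, hgv]; omega
        · rw [hgne a hav]; exact hf.1 a
      · intro a hau ha0
        have hav : a ≠ v := by intro h; rw [h, hgv] at ha0; omega
        rw [hgne a hav] at ha0
        obtain ⟨b, ⟨hab, hb2⟩, hbun⟩ := hf.2 a ha0
        have hbu : b ≠ u := by
          intro hbu; subst hbu
          exact hav (hadj_u a hab)
        have hbv : b ≠ v := by intro h; rw [h] at hb2; omega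
        refine ⟨b, ⟨hbu, hab, by rw [hgne b hbv]; exact hb2⟩, ?_⟩
        rintro c ⟨hcu, hc1, hc2⟩
        have hcv : c ≠ v := by intro h; rw [h, hgv] at hc2; omega
        rw [hgne c hcv] at hc2
        exact hbun c ⟨hc1, hc2⟩
    have hvmem : v ∈ Finset.univ.erase u := Finset.mem_erase.mpr ⟨hvu, Finset.mem_univ v⟩
    have hsg := Finset.sum_update_of_mem hvmem f 1
    rw [Finset.sdiff_singleton_eq_erase, ← hg] at hsg
    have hsf : ∑ a ∈ Finset.univ.erase u, f a
        = f v + ∑ a ∈ (Finset.univ.erase u).erase v, f a :=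
      (Finset.add_sum_erase _ f hvmem).symm
    omega

/-- in a stable tree of order ≥ 3 and diameter ≥ 4, if the second
vertex of a longest path has degree 2, then the third vertex is not adjacent to a
pendant path P₂ (off the longest path). -/
theorem stmt18 {V : Type*} [Fintype V] [DecidableEq V] (T : SimpleGraph V)
    (hT : T.IsTree) (hstab : Stable T) (hn : 3 ≤ Fintype.card V)
    (hdiam : ∃ u w : V, 4 ≤ T.dist u w)
    (x y : V) (p : T.Walk x y) (hp : p.IsPath)
    (hlong : ∀ (a b : V) (q : T.Walk a b), q.IsPath → q.length ≤ p.length)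
    (hx2 : deg T (p.getVert 1) = 2) :
    ¬ ∃ w1 w2 : V, w1 ∉ p.support ∧ w2 ∉ p.support ∧
      T.Adj (p.getVert 2) w1 ∧ T.Adj w1 w2 ∧ deg T w1 = 2 ∧ deg T w2 = 1 := by
  rintro ⟨w1, w2, hw1s, hw2s, hadj31, hadj12, hdw1, hdw2⟩
  -- notation
  set v2 := p.getVert 1 with hv2
  set v3 := p.getVert 2 with hv3
  -- p has length ≥ 4
  have hlen : 4 ≤ p.length := by
    obtain ⟨u, w, hd⟩ := hdiam
    have hd0 : T.dist u w ≠ 0 := by omega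
    obtain ⟨q, hq⟩ := exists_walk_of_dist_ne_zero hd0
    have h1 : T.dist u w ≤ q.bypass.length := dist_le _
    have h2 := hlong u w q.bypass q.bypass_isPath
    omega
  -- adjacency along the path
  have ha01 : T.Adj x v2 := by
    have := p.adj_getVert_succ (i := 0) (by omega)
    rwa [p.getVert_zero] at this
  have ha12 : T.Adj v2 v3 := p.adj_getVert_succ (i := 1) (by omega)
  -- membership of path vertices
  have hmem : ∀ i : ℕ, i ≤ p.length → p.getVert i ∈ p.support := fun i hi =>
    Walk.mem_support_iff_exists_getVert.mpr ⟨i, rfl, hi⟩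
  have hxs : x ∈ p.support := p.start_mem_support
  have hv2s : v2 ∈ p.support := hmem 1 (by omega)
  have hv3s : v3 ∈ p.support := hmem 2 (by omega)
  have hw1v2 : w1 ≠ v2 := fun h => hw1s (h ▸ hv2s)
  have hw1v3 : w1 ≠ v3 := fun h => hw1s (h ▸ hv3s)
  have hw1x : w1 ≠ x := fun h => hw1s (h ▸ hxs)
  have hw2v3 : w2 ≠ v3 := fun h => hw2s (h ▸ hv3s)
  have hw2x : w2 ≠ x := fun h => hw2s (h ▸ hxs)
  have hw2w1 : w2 ≠ w1 := hadj12.ne'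
  -- neighborhood of w2
  have hNw2 : T.neighborSet w2 = {w1} := by
    obtain ⟨a, ha⟩ := Set.ncard_eq_one.mp hdw2
    have : w1 ∈ T.neighborSet w2 := hadj12.symm
    rw [ha] at this
    rw [ha, this]
  -- neighborhood of w1
  have hNw1 : T.neighborSet w1 = {v3, w2} := by
    obtain ⟨a, b, hab, hset⟩ := Set.ncard_eq_two.mp hdw1
    have h3 : v3 ∈ ({a, b} : Set V) := by rw [← hset]; exact hadj31.symm
    have h2 : w2 ∈ ({a, b} : Set V) := by rw [← hset]; exact hadj12
    rw [hset]
    rcases h3 with h3 | h3 <;> rcases h2 with h2 | h2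
    · exact absurd (h2 ▸ h3 : v3 = w2) (fun h => hw2v3 h.symm)
    · rw [← h3, ← h2]
    · rw [← h3, ← h2, Set.pair_comm]
    · exact absurd (h2 ▸ h3 : v3 = w2) (fun h => hw2v3 h.symm)
  -- x is a leaf with neighbor v2
  have hNx : T.neighborSet x = {v2} := by
    ext z
    simp only [mem_neighborSet, Set.mem_singleton_iff]
    constructor
    · intro hxz
      by_contra hzv2
      by_cases hz : z ∈ p.support
      · -- uniqueness of paths forces z = v2
        have heq := hT.IsAcyclic.path_unique
          ⟨p.takeUntil z hz, hp.takeUntil hz⟩ (Path.singleton hxz)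
        have hval : p.takeUntil z hz = Walk.cons hxz Walk.nil := congrArg Subtype.val heq
        have hsp := p.take_spec hz
        rw [hval] at hsp
        have : p.getVert 1 = z := by
          rw [← hsp]
          simp [Walk.cons_append, Walk.nil_append, Walk.getVert_cons_succ, Walk.getVert_zero]
        exact hzv2 (this ▸ hv2.symm ▸ rfl)
      · -- extend the longest path
        have hq : (Walk.cons hxz.symm p).IsPath := hp.cons hz
        have := hlong z y (Walk.cons hxz.symm p) hq
        rw [Walk.length_cons] at this
        omega
    · intro h; rw [h]; exact ha01
  -- a minimum PRDF
  obtain ⟨f, hf, hmin⟩ := exists_min_prdf T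
  have fw2 : f w2 = 0 := leaf_zero hstab hNw2 hf hmin
  have fx : f x = 0 := leaf_zero hstab hNx hf hmin
  have fw1 : f w1 = 2 := by
    obtain ⟨b, ⟨hb1, hb2⟩, _⟩ := hf.2 w2 fw2
    have : b ∈ T.neighborSet w2 := hb1
    rw [hNw2] at this
    rwa [← this]
  have fv2 : f v2 = 2 := by
    obtain ⟨b, ⟨hb1, hb2⟩, _⟩ := hf.2 x fx
    have : b ∈ T.neighborSet x := hb1
    rw [hNx] at this
    rwa [← this]
  have fv3 : f v3 ≠ 0 := by
    intro h0
    obtain ⟨b, _, hbun⟩ := hf.2 v3 h0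
    have h1 : v2 = b := hbun v2 ⟨ha12.symm, fv2⟩
    have h2 : w1 = b := hbun w1 ⟨hadj31, fw1⟩
    exact hw1v2 (h2.trans h1.symm)
  -- build a cheaper PRDF on T - w1
  set g := Function.update f w2 1 with hg
  have hgw2 : g w2 = 1 := Function.update_self w2 1 f
  have hgne : ∀ a, a ≠ w2 → g a = f a := fun a ha => Function.update_of_ne ha 1 f
  have hle : prdn (T.induce {w | w ≠ w1}) ≤ ∑ a ∈ Finset.univ.erase w1, g a := by
    refine prdn_induce_le T w1 g (fun a => ?_) ?_
    · by_cases haw : a = w2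
      · rw [haw, hgw2]; omega
      · rw [hgne a haw]; exact hf.1 a
    · intro a haw1 ha0
      have haw2 : a ≠ w2 := by intro h; rw [h, hgw2] at ha0; omega
      rw [hgne a haw2] at ha0
      have hav3 : a ≠ v3 := by intro h; exact fv3 (h ▸ ha0)
      obtain ⟨b, ⟨hb1, hb2⟩, hbun⟩ := hf.2 a ha0
      have hbw1 : b ≠ w1 := by
        intro h
        have hmemN : a ∈ T.neighborSet w1 := by rw [← h]; exact hb1.symm
        rw [hNw1] at hmemN
        rcases hmemN with h' | h'
        · exact hav3 h'
        · exact haw2 h'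
      have hbw2 : b ≠ w2 := by intro h; rw [h, fw2] at hb2; omega
      refine ⟨b, ⟨hbw1, hb1, by rw [hgne b hbw2]; exact hb2⟩, ?_⟩
      rintro c ⟨hcw1, hc1, hc2⟩
      have hcw2 : c ≠ w2 := by intro h; rw [h, hgw2] at hc2; omega
      rw [hgne c hcw2] at hc2
      exact hbun c ⟨hc1, hc2⟩
  -- weight comparison
  have hw2mem : w2 ∈ Finset.univ.erase w1 := Finset.mem_erase.mpr ⟨hw2w1, Finset.mem_univ w2⟩
  have hsg := Finset.sum_update_of_mem hw2mem f 1
  rw [Finset.sdiff_singleton_eq_erase, ← hg] at hsg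
  have hsf1 : ∑ a, f a = f w1 + ∑ a ∈ Finset.univ.erase w1, f a :=
    (Finset.add_sum_erase _ f (Finset.mem_univ w1)).symm
  have hsf2 : ∑ a ∈ Finset.univ.erase w1, f a
      = f w2 + ∑ a ∈ (Finset.univ.erase w1).erase w2, f a :=
    (Finset.add_sum_erase _ f hw2mem).symm
  have hstable := hstab w1
  omega
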